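/- arXiv:2209.07058 — 3 statements merged into one kernel-verified Lean document; each statement's English description precedes it below -/
import Mathlib

section
/- Let ν = (1/2)(δ_{−1} + δ_{1}) and let ν_m be the empirical measure of m i.i.d. samples ε₁,…,ε_m from ν. If the event {(1/m)∑ᵢ εᵢ ≥ 2a} holds for some 0 < a ≤ 1/4, then F_{ν_m}(−1) ≤ 1/2 − a, hence F_{ν_m}^{-1}(u) = 1 for u ∈ (1/2 − a, 1], while F_ν^{-1}(u) = −1 for u ∈ (0, 1/2]; consequently W₂(ν_m, ν)² ≥ ∫_{1/2−a}^{1/2} (F_{ν_m}^{-1}(u) − F_ν^{-1}(u))² du = 4a. -/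
open MeasureTheory Set
open scoped ENNReal RealInnerProductSpace

/-- Generalized (right-continuous) inverse of a distribution function. -/
noncomputable def quantile (ν : Measure ℝ) (u : ℝ) : ℝ :=
  sInf {t : ℝ | ENNReal.ofReal u ≤ ν (Iic t)}

/-- Squared 2-Wasserstein distance: infimum of the transport cost over couplings. -/
noncomputable def W2sq (ν τ : Measure ℝ) : ℝ≥0∞ :=
  ⨅ (π : Measure (ℝ × ℝ)) (_ : π.map Prod.fst = ν) (_ : π.map Prod.snd = τ),
    ∫⁻ p, ENNReal.ofReal ((p.1 - p.2) ^ 2) ∂π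

/-- The 2-Wasserstein distance. -/
noncomputable def W2 (ν τ : Measure ℝ) : ℝ :=
  Real.sqrt (W2sq ν τ).toReal

/-- Empirical measure of a sample `Y 1, …, Y m`. -/
noncomputable def empirical {m : ℕ} (Y : Fin m → ℝ) : Measure ℝ :=
  (m : ℝ≥0∞)⁻¹ • ∑ i : Fin m, Measure.dirac (Y i)

/-- Max-sliced Wasserstein distance between the empirical measure of the sample
`X` and `μ`: the supremum over unit directions `θ` of the Wasserstein distance
between the corresponding one-dimensional marginals. -/
noncomputable def SW2 {d m : ℕ} (X : Fin m → EuclideanSpace ℝ (Fin d))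
    (μ : Measure (EuclideanSpace ℝ (Fin d))) : ℝ :=
  ⨆ θ : {θ : EuclideanSpace ℝ (Fin d) // ‖θ‖ = 1},
    W2 (empirical fun i => ⟪X i, θ.1⟫) (μ.map fun x => ⟪x, θ.1⟫)

/-- The symmetric Bernoulli measure `ν = (1/2)(δ₋₁ + δ₁)`. -/
noncomputable def nuB : Measure ℝ :=
  (2 : ℝ≥0∞)⁻¹ • (Measure.dirac (-1) + Measure.dirac 1)

theorem stmt5 (m : ℕ) (hm : 4 ≤ m) (ε : Fin m → ℝ) (hε : ∀ i, ε i = 1 ∨ ε i = -1)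
    (a : ℝ) (ha : 0 < a) (ha' : a ≤ 1 / 4)
    (hev : 2 * a ≤ (1 / (m : ℝ)) * ∑ i, ε i) :
    ((empirical ε) (Iic (-1))).toReal ≤ 1 / 2 - a ∧
    (∀ u ∈ Ioc (1 / 2 - a) (1 : ℝ), quantile (empirical ε) u = 1) ∧
    (∀ u ∈ Ioc (0 : ℝ) (1 / 2), quantile nuB u = -1) ∧
    (∫ u in Ioc (1 / 2 - a) (1 / 2 : ℝ),
        (quantile (empirical ε) u - quantile nuB u) ^ 2) = 4 * a ∧
    4 * a ≤ (W2 (empirical ε) nuB) ^ 2 := by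
  classical
  have hm0' : 0 < m := by omega
  have hm0 : (0:ℝ) < m := by exact_mod_cast hm0'
  have hmne : (m:ℝ≥0∞) ≠ 0 := by exact_mod_cast Nat.cast_ne_zero.2 (by omega)
  have hmtop : (m:ℝ≥0∞) ≠ ⊤ := ENNReal.natCast_ne_top m
  set k := (Finset.univ.filter fun i : Fin m => ε i = 1).card with hkdef
  have hkm : k + (Finset.univ.filter fun i : Fin m => ¬ ε i = 1).card = m := by
    simpa using Finset.card_filter_add_card_filter_not
      (s := (Finset.univ : Finset (Fin m))) (fun i => ε i = 1)
  have hk_le : k ≤ m := by omega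
  have hsum : (∑ i, ε i) = 2 * (k:ℝ) - m := by
    rw [← Finset.sum_filter_add_sum_filter_not Finset.univ (fun i => ε i = 1) ε]
    rw [Finset.sum_congr rfl (fun i hi => (Finset.mem_filter.1 hi).2),
        Finset.sum_congr rfl (fun i hi =>
          ((hε i).resolve_left (Finset.mem_filter.1 hi).2 : ε i = -1))]
    simp only [Finset.sum_const, nsmul_eq_mul, mul_one, mul_neg_one]
    have : ((Finset.univ.filter fun i : Fin m => ¬ ε i = 1).card : ℝ) = (m:ℝ) - k := by
      have : (Finset.univ.filter fun i : Fin m => ¬ ε i = 1).card = m - k := by omega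
      rw [this, Nat.cast_sub hk_le]
    rw [this]; ring
  have hka : 1/2 + a ≤ (k:ℝ)/m := by
    rw [hsum] at hev
    have h2 : (1/(m:ℝ)) * (2*(k:ℝ) - m) = (2*(k:ℝ) - m)/m := by ring
    rw [h2, le_div_iff₀ hm0] at hev
    rw [le_div_iff₀ hm0]
    nlinarith
  have hka' : ((m:ℝ) - k)/m ≤ 1/2 - a := by
    have h1 : ((m:ℝ) - k)/m = 1 - (k:ℝ)/m := by field_simp
    rw [h1]; linarith
  have hcast : ∀ c : ℕ, (m:ℝ≥0∞)⁻¹ * c = ENNReal.ofReal ((c:ℝ) / m) := by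
    intro c
    rw [ENNReal.ofReal_div_of_pos hm0, ENNReal.ofReal_natCast, ENNReal.ofReal_natCast,
      div_eq_mul_inv, mul_comm]
  have hemp : ∀ s : Set ℝ, MeasurableSet s →
      empirical ε s = (m:ℝ≥0∞)⁻¹ * ∑ i, (if ε i ∈ s then (1:ℝ≥0∞) else 0) := by
    intro s hs
    simp [empirical, Measure.smul_apply, Measure.finset_sum_apply,
      Measure.dirac_apply' _ hs, Set.indicator_apply, smul_eq_mul]
  have hcount_lt1 : ∀ t : ℝ, t < 1 →
      (∑ i, (if ε i ∈ Iic t then (1:ℝ≥0∞) else 0)) ≤ ((m - k : ℕ) : ℝ≥0∞) := by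
    intro t ht
    rw [Finset.sum_boole]
    have hss : (Finset.univ.filter fun i : Fin m => ε i ∈ Iic t)
        ⊆ Finset.univ.filter fun i : Fin m => ¬ ε i = 1 := by
      intro i hi
      simp only [Finset.mem_filter, mem_Iic, Finset.mem_univ, true_and] at *
      intro h; rw [h] at hi; linarith
    have hcard := Finset.card_le_card hss
    have hc2 : (Finset.univ.filter fun i : Fin m => ¬ ε i = 1).card = m - k := by omega
    exact_mod_cast Nat.cast_le.2 (by omega : (Finset.univ.filter fun i : Fin m => ε i ∈ Iic t).card ≤ m - k)
  have hcount_ge1 : ∀ t : ℝ, 1 ≤ t →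
      (∑ i, (if ε i ∈ Iic t then (1:ℝ≥0∞) else 0)) = (m : ℝ≥0∞) := by
    intro t ht
    have hall : ∀ i, ε i ∈ Iic t := by
      intro i; rcases hε i with h | h <;> rw [mem_Iic, h] <;> linarith
    rw [Finset.sum_congr rfl fun i _ => if_pos (hall i)]
    simp
  have hempIic : ∀ t : ℝ, t < 1 →
      empirical ε (Iic t) ≤ ENNReal.ofReal (((m-k:ℕ):ℝ)/m) := by
    intro t ht
    rw [hemp _ measurableSet_Iic, ← hcast]
    exact mul_le_mul_right (hcount_lt1 t ht) _
  have hofRealmk : ENNReal.ofReal (((m-k:ℕ):ℝ)/m) ≤ ENNReal.ofReal (1/2 - a) :=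
    ENNReal.ofReal_le_ofReal (by rw [Nat.cast_sub hk_le]; exact hka')
  have hemp1 : empirical ε {1} = (m:ℝ≥0∞)⁻¹ * k := by
    rw [hemp _ (measurableSet_singleton _)]
    congr 1
    simp only [mem_singleton_iff]
    rw [Finset.sum_boole]
  have hprob_emp : IsProbabilityMeasure (empirical ε) := by
    constructor
    rw [hemp _ MeasurableSet.univ]
    simp only [mem_univ, if_true, Finset.sum_const, Finset.card_univ, Fintype.card_fin,
      nsmul_eq_mul, mul_one]
    exact ENNReal.inv_mul_cancel hmne hmtop
  -- Part 1
  have part1 : ((empirical ε) (Iic (-1))).toReal ≤ 1 / 2 - a := by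
    have h := le_trans (hempIic (-1) (by norm_num)) hofRealmk
    have h2 := ENNReal.toReal_mono ENNReal.ofReal_ne_top h
    rwa [ENNReal.toReal_ofReal (by linarith)] at h2
  -- Part 2
  have part2 : ∀ u ∈ Ioc (1/2 - a) (1:ℝ), quantile (empirical ε) u = 1 := by
    intro u hu
    have hset : {t : ℝ | ENNReal.ofReal u ≤ empirical ε (Iic t)} = Ici 1 := by
      ext t
      simp only [mem_setOf_eq, mem_Ici]
      constructor
      · intro h
        by_contra ht
        push_neg at ht
        have h2 : empirical ε (Iic t) < ENNReal.ofReal u :=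
          lt_of_le_of_lt (le_trans (hempIic t ht) hofRealmk)
            ((ENNReal.ofReal_lt_ofReal_iff_of_nonneg (by linarith)).2 hu.1)
        exact absurd h (not_le.2 h2)
      · intro ht
        rw [hemp _ measurableSet_Iic]
        convert ENNReal.ofReal_le_one.2 hu.2
        convert ENNReal.inv_mul_cancel hmne hmtop using 2
        convert hcount_ge1 t ht
    rw [quantile, hset, csInf_Ici]
  -- nuB computations
  have hhalf : ENNReal.ofReal (1/2 : ℝ) = 2⁻¹ := by
    rw [ENNReal.ofReal_div_of_pos (by norm_num)]
    norm_num
  have hnuB_Iic : ∀ t : ℝ, nuB (Iic t) =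
      2⁻¹ * ((if (-1:ℝ) ≤ t then (1:ℝ≥0∞) else 0) + (if (1:ℝ) ≤ t then (1:ℝ≥0∞) else 0)) := by
    intro t
    simp only [nuB, Measure.smul_apply, Measure.add_apply,
      Measure.dirac_apply' _ measurableSet_Iic, Set.indicator_apply, mem_Iic,
      smul_eq_mul, Pi.one_apply]
    all_goals (split_ifs <;> ring)
  have part3 : ∀ u ∈ Ioc (0:ℝ) (1/2), quantile nuB u = -1 := by
    intro u hu
    have hset : {t : ℝ | ENNReal.ofReal u ≤ nuB (Iic t)} = Ici (-1) := by
      ext t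
      simp only [mem_setOf_eq, mem_Ici]
      constructor
      · intro h
        by_contra ht
        push_neg at ht
        rw [hnuB_Iic t, if_neg (by linarith), if_neg (by linarith)] at h
        simp only [add_zero, mul_zero, nonpos_iff_eq_zero, ENNReal.ofReal_eq_zero] at h
        linarith [hu.1]
      · intro ht
        rw [hnuB_Iic t, if_pos ht]
        calc ENNReal.ofReal u ≤ ENNReal.ofReal (1/2) := ENNReal.ofReal_le_ofReal hu.2
          _ = 2⁻¹ := hhalf
          _ = 2⁻¹ * 1 := (mul_one _).symm
          _ ≤ _ := mul_le_mul_right (le_add_of_nonneg_right zero_le) _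
    rw [quantile, hset, csInf_Ici]
  -- Part 4
  have part4 : (∫ u in Ioc (1 / 2 - a) (1 / 2 : ℝ),
      (quantile (empirical ε) u - quantile nuB u) ^ 2) = 4 * a := by
    have heq : EqOn (fun u => (quantile (empirical ε) u - quantile nuB u) ^ 2)
        (fun _ => (4:ℝ)) (Ioc (1/2 - a) (1/2)) := by
      intro u hu
      have h1 := part2 u ⟨hu.1, le_trans hu.2 (by norm_num)⟩
      have h2 := part3 u ⟨by linarith [hu.1], hu.2⟩
      simp only [h1, h2]
      norm_num
    rw [setIntegral_congr_fun measurableSet_Ioc heq, setIntegral_const, Real.volume_real_Ioc_of_le (by linarith),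
      smul_eq_mul]
    ring
  -- Part 5
  have hprob_nu : IsProbabilityMeasure nuB := by
    constructor
    simp only [nuB, Measure.smul_apply, Measure.add_apply, measure_univ, smul_eq_mul]
    rw [one_add_one_eq_two, ENNReal.inv_mul_cancel (by norm_num) (by norm_num)]
  have hnuBc : nuB ({-1}ᶜ : Set ℝ) = 2⁻¹ := by
    have e1 : (-1:ℝ) ∉ ({-1}ᶜ : Set ℝ) := by norm_num
    have e2 : (1:ℝ) ∈ ({-1}ᶜ : Set ℝ) := by norm_num
    simp only [nuB, Measure.smul_apply, Measure.add_apply,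
      Measure.dirac_apply' _ (measurableSet_singleton (-1:ℝ)).compl, Set.indicator_apply,
      if_neg e1, if_pos e2, smul_eq_mul, Pi.one_apply]
    ring
  have hS : MeasurableSet {p : ℝ×ℝ | p.1 = 1 ∧ p.2 = -1} := by
    have : {p : ℝ×ℝ | p.1 = 1 ∧ p.2 = -1}
        = (Prod.fst ⁻¹' {1}) ∩ (Prod.snd ⁻¹' {-1}) := rfl
    rw [this]
    exact ((measurableSet_singleton (1:ℝ)).preimage measurable_fst).inter
      ((measurableSet_singleton (-1:ℝ)).preimage measurable_snd)
  have hlow : ENNReal.ofReal (4*a) ≤ W2sq (empirical ε) nuB := by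
    refine le_iInf fun π => le_iInf fun hπ1 => le_iInf fun hπ2 => ?_
    have hπfst : π {p : ℝ×ℝ | p.1 = 1} = (m:ℝ≥0∞)⁻¹ * k := by
      have h := Measure.map_apply (μ := π) measurable_fst (measurableSet_singleton (1:ℝ))
      rw [hπ1, hemp1] at h
      exact h.symm
    have hπsnd : π {p : ℝ×ℝ | ¬ p.2 = -1} = 2⁻¹ := by
      have h := Measure.map_apply (μ := π) measurable_snd (measurableSet_singleton (-1:ℝ)).compl
      rw [hπ2, hnuBc] at h
      exact h.symm
    have hsub : π {p : ℝ×ℝ | p.1 = 1}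
        ≤ π {p : ℝ×ℝ | p.1 = 1 ∧ p.2 = -1} + π {p : ℝ×ℝ | ¬ p.2 = -1} := by
      refine le_trans (measure_mono ?_) (measure_union_le _ _)
      intro p hp
      by_cases h : p.2 = -1
      · exact Or.inl ⟨hp, h⟩
      · exact Or.inr h
    have hπS : ENNReal.ofReal a ≤ π {p : ℝ×ℝ | p.1 = 1 ∧ p.2 = -1} := by
      have h1 : ENNReal.ofReal a + 2⁻¹ ≤ π {p : ℝ×ℝ | p.1 = 1 ∧ p.2 = -1} + 2⁻¹ := by
        calc ENNReal.ofReal a + 2⁻¹ = ENNReal.ofReal (a + 1/2) := by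
              rw [ENNReal.ofReal_add ha.le (by norm_num), hhalf]
          _ ≤ ENNReal.ofReal ((k:ℝ)/m) := ENNReal.ofReal_le_ofReal (by linarith)
          _ = (m:ℝ≥0∞)⁻¹ * k := (hcast k).symm
          _ = π {p : ℝ×ℝ | p.1 = 1} := hπfst.symm
          _ ≤ _ := by rw [← hπsnd]; exact hsub
      exact (ENNReal.add_le_add_iff_right (by norm_num)).1 h1
    calc ENNReal.ofReal (4*a) = 4 * ENNReal.ofReal a := by
          rw [ENNReal.ofReal_mul (by norm_num)]
          norm_num
      _ ≤ 4 * π {p : ℝ×ℝ | p.1 = 1 ∧ p.2 = -1} := mul_le_mul_right hπS _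
      _ = ∫⁻ _ in {p : ℝ×ℝ | p.1 = 1 ∧ p.2 = -1}, (4:ℝ≥0∞) ∂π := (setLIntegral_const _ _).symm
      _ = ∫⁻ p in {p : ℝ×ℝ | p.1 = 1 ∧ p.2 = -1}, ENNReal.ofReal ((p.1 - p.2)^2) ∂π := by
          refine setLIntegral_congr_fun hS (fun p hp => ?_)
          rw [hp.1, hp.2]
          norm_num
      _ ≤ ∫⁻ p, ENNReal.ofReal ((p.1 - p.2)^2) ∂π := setLIntegral_le_lintegral _ _
  have hfin : W2sq (empirical ε) nuB ≠ ⊤ := by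
    haveI := hprob_emp
    haveI := hprob_nu
    set π₀ := (empirical ε).prod nuB with hπ₀
    have h1 : π₀.map Prod.fst = empirical ε := by
      rw [hπ₀, Measure.map_fst_prod, measure_univ, one_smul]
    have h2 : π₀.map Prod.snd = nuB := by
      rw [hπ₀, Measure.map_snd_prod, measure_univ, one_smul]
    have hms : MeasurableSet (({-1,1}:Set ℝ)) := (measurableSet_singleton (1:ℝ)).insert (-1)
    have hc1 : empirical ε (({-1,1}:Set ℝ))ᶜ = 0 := by
      rw [hemp _ hms.compl]
      have hni : ∀ i, ε i ∉ (({-1,1}:Set ℝ))ᶜ := by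
        intro i; rcases hε i with h | h <;> simp [h]
      simp [hni]
    have hc2 : nuB (({-1,1}:Set ℝ))ᶜ = 0 := by
      have e1 : (-1:ℝ) ∉ (({-1,1}:Set ℝ))ᶜ := by norm_num
      have e2 : (1:ℝ) ∉ (({-1,1}:Set ℝ))ᶜ := by norm_num
      simp only [nuB, Measure.smul_apply, Measure.add_apply,
        Measure.dirac_apply' _ hms.compl, Set.indicator_apply, if_neg e1, if_neg e2,
        smul_eq_mul, add_zero, mul_zero]
    have hT : π₀ ((({-1,1}:Set ℝ) ×ˢ ({-1,1}:Set ℝ))ᶜ) = 0 := by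
      have hsub : ((({-1,1}:Set ℝ) ×ˢ ({-1,1}:Set ℝ))ᶜ)
          ⊆ (((({-1,1}:Set ℝ))ᶜ) ×ˢ (univ : Set ℝ)) ∪ ((univ : Set ℝ) ×ˢ ((({-1,1}:Set ℝ))ᶜ)) := by
        intro p hp
        simp only [mem_compl_iff, mem_prod, mem_union, mem_univ, and_true, true_and] at *
        tauto
      refine measure_mono_null hsub (measure_union_null ?_ ?_)
      · rw [hπ₀, Measure.prod_prod, hc1, zero_mul]
      · rw [hπ₀, Measure.prod_prod, hc2, mul_zero]
    have hae : ∀ᵐ p ∂π₀, ENNReal.ofReal ((p.1 - p.2)^2) ≤ 4 := by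
      have hmem : ∀ᵐ p ∂π₀, p ∈ ({-1,1}:Set ℝ) ×ˢ ({-1,1}:Set ℝ) := by
        rw [ae_iff]
        convert hT using 2
        exact rfl
      filter_upwards [hmem] with p hp
      obtain ⟨h1', h2'⟩ := hp
      have hb : (p.1 - p.2)^2 ≤ 4 := by
        simp only [mem_insert_iff, mem_singleton_iff] at h1' h2'
        rcases h1' with h1' | h1' <;> rcases h2' with h2' | h2' <;>
          rw [h1', h2'] <;> norm_num
      calc ENNReal.ofReal ((p.1 - p.2)^2) ≤ ENNReal.ofReal 4 := ENNReal.ofReal_le_ofReal hb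
        _ = 4 := by norm_num
    have hbound : ∫⁻ p, ENNReal.ofReal ((p.1 - p.2)^2) ∂π₀ ≤ 4 := by
      calc ∫⁻ p, ENNReal.ofReal ((p.1 - p.2)^2) ∂π₀ ≤ ∫⁻ _, (4:ℝ≥0∞) ∂π₀ :=
            lintegral_mono_ae hae
        _ = 4 := by simp [lintegral_const, measure_univ]
    have hle : W2sq (empirical ε) nuB ≤ 4 := by
      refine le_trans (iInf_le_of_le π₀ ?_) hbound
      exact le_trans (iInf_le _ h1) (iInf_le _ h2)
    exact ne_top_of_le_ne_top (by norm_num) hle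
  have part5 : 4 * a ≤ (W2 (empirical ε) nuB) ^ 2 := by
    rw [W2, Real.sq_sqrt ENNReal.toReal_nonneg]
    have h := ENNReal.toReal_mono hfin hlow
    rwa [ENNReal.toReal_ofReal (by positivity)] at h
  exact ⟨part1, part2, part3, part4, part5⟩
end

section
/- Define ψ₊(u) = u + 2√(Δ·γ(u))·log(e/γ(u)) on [0,1] where γ(u) = min{u, 1−u} and 0 < Δ ≤ (10κ)^{-2} with κ = 400, and let δ = κΔ log²(e/Δ). Then for every u ∈ [δ, 1−δ]: (1) ψ₊(u) ∈ [Δ, 1−Δ]; (2) |ψ₊(u) − u| ≤ (1/10)·γ(u). -/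
/-! With `L = log (e/Δ) ≥ 1`, the hypothesis `u ∈ [δ, 1 - δ]` says `400 Δ L² ≤ γ(u)`. Since `γ ≥ Δ`,
`log (e/γ) ≤ L`, and `√(Δ γ) · L ≤ γ / 20` is equivalent to `400 Δ L² ≤ γ`; hence the correction
`ψ₊(u) - u` lies in `[0, γ/10]`, and `γ ≥ 400 Δ` leaves room for `Δ` on both sides of `ψ₊(u)`. -/

open Real Set

lemma one_le_log_exp_div {x : ℝ} (hx0 : 0 < x) (hx1 : x ≤ 1) : 1 ≤ log (exp 1 / x) := by
  rw [log_div (exp_ne_zero 1) hx0.ne', log_exp]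
  linarith [log_nonpos hx0.le hx1]

lemma log_exp_div_le_of_le {x y : ℝ} (hx : 0 < x) (hxy : x ≤ y) :
    log (exp 1 / y) ≤ log (exp 1 / x) :=
  log_le_log (div_pos (exp_pos 1) (hx.trans_le hxy)) (div_le_div_of_nonneg_left (exp_pos 1).le hx hxy)

lemma self_le_mul_log_exp_div_sq {Δ : ℝ} (hΔ : 0 < Δ) (hΔ1 : Δ ≤ 1) :
    Δ ≤ Δ * log (exp 1 / Δ) ^ 2 :=
  le_mul_of_one_le_right hΔ.le (one_le_pow₀ (one_le_log_exp_div hΔ hΔ1))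

lemma sqrt_mul_mul_le_div {Δ γ L c : ℝ} (hγ : 0 ≤ γ) (hL : 0 ≤ L) (hc : 0 < c)
    (h : c ^ 2 * Δ * L ^ 2 ≤ γ) : √(Δ * γ) * L ≤ γ / c := by
  rw [← sqrt_sq hL, ← sqrt_mul' _ (sq_nonneg L), ← sqrt_sq (div_nonneg hγ hc.le)]
  apply sqrt_le_sqrt
  rw [div_pow, le_div_iff₀ (by positivity)]
  nlinarith [mul_le_mul_of_nonneg_right h hγ]

lemma two_mul_sqrt_mul_log_exp_div_le {Δ γ c : ℝ} (hΔ : 0 < Δ) (hΔγ : Δ ≤ γ) (hγ1 : γ ≤ 1)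
    (hc : 0 < c) (h : c ^ 2 * Δ * log (exp 1 / Δ) ^ 2 ≤ γ) :
    2 * √(Δ * γ) * log (exp 1 / γ) ≤ 2 * (γ / c) := by
  have hγ : 0 < γ := hΔ.trans_le hΔγ
  have hL : 0 ≤ log (exp 1 / Δ) := zero_le_one.trans (one_le_log_exp_div hΔ (hΔγ.trans hγ1))
  calc 2 * √(Δ * γ) * log (exp 1 / γ) ≤ 2 * (√(Δ * γ) * log (exp 1 / Δ)) := by
        rw [mul_assoc]
        gcongr 2 * (_ * ?_)
        exact log_exp_div_le_of_le hΔ hΔγ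
    _ ≤ 2 * (γ / c) := by gcongr; exact sqrt_mul_mul_le_div hγ.le hL hc h

theorem stmt6 (Δ : ℝ) (hΔ : 0 < Δ) (hΔ' : Δ ≤ ((10 * 400 : ℝ) ^ 2)⁻¹) :
    ∀ u ∈ Icc (400 * Δ * (Real.log (Real.exp 1 / Δ)) ^ 2)
        (1 - 400 * Δ * (Real.log (Real.exp 1 / Δ)) ^ 2),
      (u + 2 * Real.sqrt (Δ * min u (1 - u)) * Real.log (Real.exp 1 / min u (1 - u)) ∈
          Icc Δ (1 - Δ)) ∧
      |(u + 2 * Real.sqrt (Δ * min u (1 - u)) * Real.log (Real.exp 1 / min u (1 - u))) - u| ≤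
        (1 / 10) * min u (1 - u) := by
  rintro u ⟨hu_lo, hu_hi⟩
  set γ := min u (1 - u)
  have hΔ1 : Δ ≤ 1 := hΔ'.trans (by norm_num)
  have hδΔ := self_le_mul_log_exp_div_sq hΔ hΔ1
  have hδγ : 400 * Δ * log (exp 1 / Δ) ^ 2 ≤ γ := le_min hu_lo (by linarith)
  have hγ1 : γ ≤ 1 := (min_le_left u _).trans (by linarith)
  have hγ : 0 < γ := by linarith
  have hT0 : 0 ≤ 2 * √(Δ * γ) * log (exp 1 / γ) :=
    mul_nonneg (by positivity) (zero_le_one.trans (one_le_log_exp_div hγ hγ1))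
  have hT := two_mul_sqrt_mul_log_exp_div_le (c := 20) hΔ (by linarith) hγ1 (by norm_num)
    (by linarith)
  refine ⟨⟨?_, ?_⟩, ?_⟩
  · linarith [min_le_left u (1 - u)]
  · linarith [min_le_right u (1 - u)]
  · rw [add_sub_cancel_left, abs_of_nonneg hT0]
    linarith
end

section
/- Let g₁,…,g_n be i.i.d. standard gaussian random variables and g*_j the j-th largest of (|gᵢ|)ᵢ. There exist absolute constants c₃, c₄ such that for every 1 ≤ j ≤ n and every u ≥ c₃, P(g*_j ≥ u√(log(en/j))) ≤ 2 exp(−c₄ u² j log(en/j)). -/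
open MeasureTheory Set

/-- Non-increasing rearrangement of the absolute values of a vector:
`starVec g j` is the `(j+1)`-st largest of `(|g i|)ᵢ`. -/
noncomputable def starVec {n : ℕ} (a : Fin n → ℝ) : Fin n → ℝ :=
  fun i => |a (Tuple.sort (fun j => -|a j|) i)|

/-- The law of `n` i.i.d. standard gaussian random variables. -/
noncomputable def stdGaussian (n : ℕ) : Measure (Fin n → ℝ) :=
  Measure.pi fun _ : Fin n => ProbabilityTheory.gaussianReal 0 1

open ProbabilityTheory Real
open scoped NNReal ENNReal

lemma gaussPDF_le {t x : ℝ} (ht : 0 ≤ t) (hx : t ≤ x) :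
    gaussianPDF 0 1 x ≤ ENNReal.ofReal (rexp (-t ^ 2 / 2)) * gaussianPDF t 1 x := by
  rw [gaussianPDF, gaussianPDF, ← ENNReal.ofReal_mul (by positivity)]
  apply ENNReal.ofReal_le_ofReal
  unfold gaussianPDFReal
  have h1 : (0:ℝ) ≤ (√(2 * π * ((1:ℝ≥0):ℝ)))⁻¹ := by positivity
  have h2 : rexp (-(x - 0) ^ 2 / (2 * ((1:ℝ≥0):ℝ)))
      ≤ rexp (-t ^ 2 / 2) * rexp (-(x - t) ^ 2 / (2 * ((1:ℝ≥0):ℝ))) := by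
    rw [← Real.exp_add]
    apply Real.exp_le_exp.2
    push_cast
    nlinarith [mul_nonneg ht (sub_nonneg.2 hx)]
  calc (√(2 * π * ((1:ℝ≥0):ℝ)))⁻¹ * rexp (-(x - 0) ^ 2 / (2 * ((1:ℝ≥0):ℝ)))
      ≤ (√(2 * π * ((1:ℝ≥0):ℝ)))⁻¹ *
        (rexp (-t ^ 2 / 2) * rexp (-(x - t) ^ 2 / (2 * ((1:ℝ≥0):ℝ)))) :=
        mul_le_mul_of_nonneg_left h2 h1
    _ = rexp (-t ^ 2 / 2) *
        ((√(2 * π * ((1:ℝ≥0):ℝ)))⁻¹ * rexp (-(x - t) ^ 2 / (2 * ((1:ℝ≥0):ℝ)))) := by ring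

lemma gauss_Ici {t : ℝ} (ht : 0 ≤ t) :
    gaussianReal 0 1 (Ici t) ≤ ENNReal.ofReal (rexp (-t ^ 2 / 2)) := by
  rw [gaussianReal_apply 0 one_ne_zero]
  calc ∫⁻ x in Ici t, gaussianPDF 0 1 x
      ≤ ∫⁻ x in Ici t, ENNReal.ofReal (rexp (-t ^ 2 / 2)) * gaussianPDF t 1 x :=
        setLIntegral_mono ((measurable_gaussianPDF t 1).const_mul _)
          fun x hx => gaussPDF_le ht hx
    _ = ENNReal.ofReal (rexp (-t ^ 2 / 2)) * ∫⁻ x in Ici t, gaussianPDF t 1 x :=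
        lintegral_const_mul _ (measurable_gaussianPDF t 1)
    _ ≤ ENNReal.ofReal (rexp (-t ^ 2 / 2)) * 1 := by
        gcongr
        rw [← gaussianReal_apply t one_ne_zero]
        exact prob_le_one
    _ = ENNReal.ofReal (rexp (-t ^ 2 / 2)) := mul_one _

lemma gauss_abs {t : ℝ} (ht : 0 ≤ t) :
    gaussianReal 0 1 {x | t ≤ |x|} ≤ ENNReal.ofReal (2 * rexp (-t ^ 2 / 2)) := by
  have hsub : {x : ℝ | t ≤ |x|} ⊆ Ici t ∪ Iic (-t) := by
    intro x hx
    simp only [Set.mem_setOf_eq] at hx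
    rcases le_abs.mp hx with h | h
    · exact Or.inl h
    · exact Or.inr (le_neg.mp h)
  have hneg : gaussianReal 0 1 (Iic (-t)) = gaussianReal 0 1 (Ici t) := by
    have hmap := gaussianReal_map_const_mul (μ := 0) (v := 1) (-1)
    have h1 : (NNReal.mk ((-1:ℝ)^2) (sq_nonneg _) : ℝ≥0) = 1 := NNReal.eq (by simp)
    rw [mul_zero, h1, mul_one] at hmap
    conv_rhs => rw [← hmap]
    rw [Measure.map_apply (measurable_const_mul _) measurableSet_Ici]
    congr 1
    ext x
    simp [le_neg]
  calc gaussianReal 0 1 {x | t ≤ |x|}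
      ≤ gaussianReal 0 1 (Ici t ∪ Iic (-t)) := measure_mono hsub
    _ ≤ gaussianReal 0 1 (Ici t) + gaussianReal 0 1 (Iic (-t)) := measure_union_le _ _
    _ ≤ ENNReal.ofReal (rexp (-t ^ 2 / 2)) + ENNReal.ofReal (rexp (-t ^ 2 / 2)) :=
        add_le_add (gauss_Ici ht) (hneg ▸ gauss_Ici ht)
    _ = ENNReal.ofReal (2 * rexp (-t ^ 2 / 2)) := by
        rw [← ENNReal.ofReal_add (by positivity) (by positivity)]; ring_nf

lemma stdGaussian_prod {n : ℕ} (S : Finset (Fin n)) (t : ℝ) :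
    stdGaussian n {g | ∀ i ∈ S, t ≤ |g i|}
      = (gaussianReal 0 1 {x | t ≤ |x|}) ^ S.card := by
  have hset : {g : Fin n → ℝ | ∀ i ∈ S, t ≤ |g i|}
      = Set.pi Set.univ (fun i => if i ∈ S then {x : ℝ | t ≤ |x|} else Set.univ) := by
    ext g
    simp only [Set.mem_setOf_eq, Set.mem_pi, Set.mem_univ, true_implies]
    constructor
    · intro h i; split_ifs with hi
      · exact h i hi
      · trivial
    · intro h i hi; have := h i; rwa [if_pos hi] at this
  rw [hset, _root_.stdGaussian, Measure.pi_pi]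
  simp only [apply_ite (gaussianReal 0 1), measure_univ]
  rw [Finset.prod_ite_mem, Finset.univ_inter, Finset.prod_const]

lemma starVec_subset {n : ℕ} (j : Fin n) (t : ℝ) :
    {g : Fin n → ℝ | t ≤ starVec g j} ⊆
      ⋃ S ∈ Finset.powersetCard ((j : ℕ) + 1) (Finset.univ : Finset (Fin n)),
        {g : Fin n → ℝ | ∀ i ∈ S, t ≤ |g i|} := by
  intro g hg
  simp only [Set.mem_setOf_eq] at hg
  set σ := Tuple.sort (fun i : Fin n => -|g i|) with hσ
  simp only [Set.mem_iUnion, Set.mem_setOf_eq]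
  refine ⟨(Finset.Iic j).map σ.toEmbedding, ?_, ?_⟩
  · rw [Finset.mem_powersetCard_univ, Finset.card_map, Fin.card_Iic]
  · intro i hi
    rw [Finset.mem_map] at hi
    obtain ⟨i', hi', rfl⟩ := hi
    have hmon := Tuple.monotone_sort (fun i : Fin n => -|g i|) (Finset.mem_Iic.mp hi')
    simp only [Function.comp_apply, ← hσ, neg_le_neg_iff] at hmon
    exact le_trans hg hmon

theorem stmt19 :
    ∃ c₃ c₄ : ℝ, 0 < c₃ ∧ 0 < c₄ ∧
      ∀ n : ℕ, 0 < n → ∀ (j : Fin n) (u : ℝ), c₃ ≤ u →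
        stdGaussian n
            {g | u * Real.sqrt (Real.log (Real.exp 1 * n / ((j : ℕ) + 1))) ≤ starVec g j} ≤
          ENNReal.ofReal (2 * Real.exp (-c₄ * u ^ 2 * ((j : ℕ) + 1) *
            Real.log (Real.exp 1 * n / ((j : ℕ) + 1)))) := by
  refine ⟨3, 1/4, by norm_num, by norm_num, ?_⟩
  intro n hn j u hu
  set L : ℝ := Real.log (Real.exp 1 * n / ((j : ℕ) + 1)) with hL
  set k : ℕ := (j : ℕ) + 1 with hk
  have hkR : ((j : ℕ) + 1 : ℝ) = (k : ℝ) := by push_cast [hk]; ring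
  have hkn : k ≤ n := j.2
  have hk0 : (0:ℝ) < (k : ℝ) := by positivity
  have hknR : (k : ℝ) ≤ (n : ℝ) := Nat.cast_le.2 hkn
  have hL1 : 1 ≤ L := by
    rw [hL]
    calc (1:ℝ) = Real.log (Real.exp 1) := (Real.log_exp 1).symm
      _ ≤ _ := by
          apply Real.log_le_log (Real.exp_pos 1)
          rw [hkR, le_div_iff₀ hk0]
          nlinarith [Real.exp_pos 1]
  have hL0 : (0:ℝ) ≤ L := zero_le_one.trans hL1
  have hu0 : (0:ℝ) ≤ u := le_trans (by norm_num) hu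
  set t : ℝ := u * Real.sqrt L with hT
  have ht : 0 ≤ t := mul_nonneg hu0 (Real.sqrt_nonneg _)
  have ht2 : t ^ 2 = u ^ 2 * L := by rw [hT, mul_pow, Real.sq_sqrt hL0]
  have hC : (n.choose k : ℝ) ≤ Real.exp (k * L) := by
    have h1 : (n.choose k : ℝ) ≤ (n:ℝ) ^ k / (Nat.factorial k) := Nat.choose_le_pow_div k n
    have h2 : (k:ℝ) ^ k / (Nat.factorial k) ≤ Real.exp k := Real.pow_div_factorial_le_exp (k:ℝ) (Nat.cast_nonneg k) k
    have hfac : (0:ℝ) < ((Nat.factorial k) : ℝ) := by exact_mod_cast Nat.factorial_pos k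
    have hexpL : Real.exp L = Real.exp 1 * n / k := by
      have hn0 : (0:ℝ) < n := Nat.cast_pos.2 hn
      rw [hL, hkR]
      exact Real.exp_log (div_pos (mul_pos (Real.exp_pos 1) hn0) hk0)
    have hekL : Real.exp ((k:ℝ) * L) = (Real.exp 1 * n / k) ^ k := by
      rw [Real.exp_nat_mul, hexpL]
    refine h1.trans ?_
    rw [hekL, div_pow, mul_pow]
    have hexpk : Real.exp 1 ^ k = Real.exp k := by
      rw [← Real.exp_nat_mul, mul_one]
    rw [div_le_div_iff₀ hfac (by positivity)]
    have hkk : (k:ℝ) ^ k ≤ Real.exp k * (Nat.factorial k) := by rwa [div_le_iff₀ hfac] at h2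
    have hnn : (0:ℝ) ≤ (n:ℝ) ^ k := by positivity
    calc (n:ℝ) ^ k * (k:ℝ) ^ k ≤ (n:ℝ) ^ k * (Real.exp k * (Nat.factorial k)) :=
          mul_le_mul_of_nonneg_left hkk hnn
      _ = Real.exp 1 ^ k * (n:ℝ) ^ k * (Nat.factorial k) := by rw [hexpk]; ring
  have key : (n.choose k : ℝ) * (2 * Real.exp (-t ^ 2 / 2)) ^ k
      ≤ 2 * Real.exp (-(1/4) * u ^ 2 * k * L) := by
    have hpow : (2 * Real.exp (-t ^ 2 / 2)) ^ k = Real.exp ((Real.log 2 + -t ^ 2 / 2) * k) := by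
      rw [mul_comm (Real.log 2 + -t ^ 2 / 2), Real.exp_nat_mul, Real.exp_add,
        Real.exp_log (by norm_num : (0:ℝ) < 2)]
    calc (n.choose k : ℝ) * (2 * Real.exp (-t ^ 2 / 2)) ^ k
        ≤ Real.exp ((k:ℝ) * L) * (2 * Real.exp (-t ^ 2 / 2)) ^ k :=
          mul_le_mul_of_nonneg_right hC (by positivity)
      _ = Real.exp ((k:ℝ) * L + (Real.log 2 + -t ^ 2 / 2) * k) := by
          rw [hpow, ← Real.exp_add]
      _ ≤ Real.exp (-(1/4) * u ^ 2 * k * L) := by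
          apply Real.exp_le_exp.2
          rw [ht2]
          have hlog2 : Real.log 2 ≤ 1 := by
            have := Real.log_two_lt_d9; linarith
          have hu2 : 9 ≤ u ^ 2 := by nlinarith
          have h9 : 9 * ((k:ℝ) * L) ≤ u ^ 2 * ((k:ℝ) * L) :=
            mul_le_mul_of_nonneg_right hu2 (by positivity)
          have hlogk : Real.log 2 * (k:ℝ) ≤ L * (k:ℝ) :=
            mul_le_mul_of_nonneg_right (hlog2.trans hL1) hk0.le
          nlinarith
      _ ≤ 2 * Real.exp (-(1/4) * u ^ 2 * k * L) := by
          nlinarith [Real.exp_pos (-(1/4) * u ^ 2 * (k:ℝ) * L)]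
  calc stdGaussian n {g | t ≤ starVec g j}
      ≤ stdGaussian n (⋃ S ∈ Finset.powersetCard k (Finset.univ : Finset (Fin n)),
          {g : Fin n → ℝ | ∀ i ∈ S, t ≤ |g i|}) := measure_mono (starVec_subset j t)
    _ ≤ ∑ S ∈ Finset.powersetCard k (Finset.univ : Finset (Fin n)),
          stdGaussian n {g : Fin n → ℝ | ∀ i ∈ S, t ≤ |g i|} :=
        measure_biUnion_finset_le _ _
    _ = ∑ S ∈ Finset.powersetCard k (Finset.univ : Finset (Fin n)),
          (gaussianReal 0 1 {x | t ≤ |x|}) ^ k := by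
        refine Finset.sum_congr rfl fun S hS => ?_
        rw [stdGaussian_prod, Finset.mem_powersetCard_univ.mp hS]
    _ = (n.choose k : ℝ≥0∞) * (gaussianReal 0 1 {x | t ≤ |x|}) ^ k := by
        rw [Finset.sum_const, Finset.card_powersetCard, Finset.card_univ,
          Fintype.card_fin, nsmul_eq_mul]
    _ ≤ (n.choose k : ℝ≥0∞) * (ENNReal.ofReal (2 * rexp (-t ^ 2 / 2))) ^ k := by
        gcongr
        exact gauss_abs ht
    _ = ENNReal.ofReal ((n.choose k : ℝ) * (2 * rexp (-t ^ 2 / 2)) ^ k) := by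
        rw [ENNReal.ofReal_mul (by positivity : (0:ℝ) ≤ (n.choose k : ℝ)),
          ENNReal.ofReal_pow (by positivity), ENNReal.ofReal_natCast]
    _ ≤ ENNReal.ofReal (2 * Real.exp (-(1/4) * u ^ 2 * ((j:ℕ) + 1) * L)) := by
        apply ENNReal.ofReal_le_ofReal
        rw [hkR]
        exact key
end
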